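/- Let R be any (qubit) excitation rotation and t ∈ ℕ₊. Then H^even_t is an invariant subspace of ⟨R⟩_t. Moreover, for any sequence R⃗ of (qubit) excitation rotations and any k ∈ ℕ₊, the (R⃗,t,k)-moment vector satisfies |Ψ^R⃗_{t,k}⟩ ∈ H^even_t, and |Ψ^R⃗_{t,∞}⟩ ∈ H^even_t whenever the limit defining it exists. -/

import Mathlib

open MeasureTheory Matrix Finset Filter

noncomputable section

namespace DUCC

attribute [local instance] Classical.propDecidable

/-- The space of `n`-qubit operators: `2^n × 2^n` complex matrices, indexed by
bit strings `Fin n → Fin 2`. -/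
abbrev QMat (n : ℕ) := Matrix (Fin n → Fin 2) (Fin n → Fin 2) ℂ

/-- The space of `n`-qubit states. -/
abbrev QVec (n : ℕ) := (Fin n → Fin 2) → ℂ

/-- The 2×2 matrix `Q = |0⟩⟨1|`. -/
def Qmat : Matrix (Fin 2) (Fin 2) ℂ := fun i j => if i = 0 ∧ j = 1 then 1 else 0

/-- `Q† = |1⟩⟨0|`. -/
def Qd : Matrix (Fin 2) (Fin 2) ℂ := Qmatᴴ

/-- Embed a single-qubit operator `M` at qubit `p` (i.e. `M_p = I ⊗ ⋯ ⊗ M ⊗ ⋯ ⊗ I`). -/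
def embed (n : ℕ) (M : Matrix (Fin 2) (Fin 2) ℂ) (p : Fin n) : QMat n :=
  fun x y => (if ∀ a, a ≠ p → x a = y a then 1 else 0) * M (x p) (y p)

/-- A string of Pauli-`Z` operators over the index set `S`. -/
def Zstr (n : ℕ) (S : Finset (Fin n)) : QMat n :=
  Matrix.diagonal fun x => ∏ a ∈ S, (if x a = 1 then (-1 : ℂ) else 1)

/-- The Jordan–Wigner annihilation operator `â_p = Q_p ∏_{a<p} Z_a`. -/
def aop (n : ℕ) (p : Fin n) : QMat n :=
  Zstr n (Finset.univ.filter fun a => a < p) * embed n Qmat p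

/-- Ordered product of finitely many matrices (or monoid elements). -/
def finProd {α : Type*} [Monoid α] (r : ℕ) (f : Fin r → α) : α :=
  ((List.finRange r).map f).prod

/-- The qubit excitation operator `Q_{c 1}† ⋯ Q_{c r}† Q_{d 1} ⋯ Q_{d r}`. -/
def qubitExc (n r : ℕ) (c d : Fin r → Fin n) : QMat n :=
  finProd r (fun i => embed n Qd (c i)) * finProd r (fun i => embed n Qmat (d i))

/-- The fermionic excitation operator `â_{c 1}† ⋯ â_{c r}† â_{d 1} ⋯ â_{d r}`. -/
def fermExc (n r : ℕ) (c d : Fin r → Fin n) : QMat n :=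
  finProd r (fun i => (aop n (c i))ᴴ) * finProd r (fun i => aop n (d i))

/-- The rotation `R(θ) = exp (θ (τ - τ†))` generated by an operator `τ`. -/
def excRot {n : ℕ} (τ : QMat n) (θ : ℝ) : QMat n :=
  NormedSpace.exp ((θ : ℂ) • (τ - τᴴ))

/-- `τ` is a (qubit or fermionic) excitation operator. -/
def IsExcitationOp {n : ℕ} (τ : QMat n) : Prop :=
  ∃ (r : ℕ) (c : Fin r → Fin n) (d : Fin r → Fin n), 0 < r ∧
    Function.Injective (Sum.elim c d) ∧
    (τ = qubitExc n r c d ∨ τ = fermExc n r c d)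

/-- `R` is a (qubit) excitation rotation. -/
def IsExcRotation {n : ℕ} (R : ℝ → QMat n) : Prop :=
  ∃ τ : QMat n, IsExcitationOp τ ∧ ∀ θ, R θ = excRot τ θ

/-- The Hartree–Fock state `|1…10…0⟩` with `η` electrons. -/
def psi0 (n η : ℕ) : QVec n :=
  fun x => if ∀ i : Fin n, (x i = 1 ↔ (i : ℕ) < η) then 1 else 0

/-- The rank-one projector `|v⟩⟨v|`. -/
def ketbra {n : ℕ} (v : QVec n) : QMat n := fun x y => v x * star (v y)

/-- The alternated dUCC ansatz `U^R⃗_k(θ⃗) = ∏_{i=1}^k ∏_{j=1}^m R_j(θ_j^{(i)})`. -/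
def ansatz {n : ℕ} (m k : ℕ) (R : Fin m → ℝ → QMat n) (θ : Fin k × Fin m → ℝ) : QMat n :=
  finProd k (fun i => finProd m (fun j => R j (θ (i, j))))

/-- The cost function `C(θ⃗; O) = tr (O U(θ⃗) |ψ₀⟩⟨ψ₀| U(θ⃗)†)`. -/
def costFn {n : ℕ} (η m k : ℕ) (R : Fin m → ℝ → QMat n) (O : QMat n)
    (θ : Fin k × Fin m → ℝ) : ℝ :=
  (O * ansatz m k R θ * ketbra (psi0 n η) * (ansatz m k R θ)ᴴ).trace.re

/-- Expectation of `f` with `θ⃗` uniform on `[0, 2π)^ι`. -/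
def uExp {ι : Type*} [Fintype ι] (f : (ι → ℝ) → ℝ) : ℝ :=
  (1 / (2 * Real.pi)) ^ (Fintype.card ι) *
    ∫ θ in Set.pi Set.univ fun _ : ι => Set.Ico (0 : ℝ) (2 * Real.pi), f θ

/-- Variance of `f` with `θ⃗` uniform on `[0, 2π)^ι`. -/
def uVar {ι : Type*} [Fintype ι] (f : (ι → ℝ) → ℝ) : ℝ :=
  uExp (fun θ => (f θ - uExp f) ^ 2)

/-- The partial derivative of `f` in the coordinate `x`. -/
def pderiv {ι : Type*} (f : (ι → ℝ) → ℝ) (x : ι) (θ : ι → ℝ) : ℝ :=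
  deriv (fun s => f (Function.update θ x s)) (θ x)

/-- `(â_p† â_q + h.c.)`. -/
def singleHerm (n : ℕ) (p q : Fin n) : QMat n :=
  (aop n p)ᴴ * aop n q + ((aop n p)ᴴ * aop n q)ᴴ

/-- `(â_p† â_q† â_r â_s + h.c.)`. -/
def doubleHerm (n : ℕ) (p q r s : Fin n) : QMat n :=
  (aop n p)ᴴ * (aop n q)ᴴ * aop n r * aop n s +
    ((aop n p)ᴴ * (aop n q)ᴴ * aop n r * aop n s)ᴴ

/-- The electronic structure Hamiltonian. -/
def Hel (n : ℕ) (h : Fin n → Fin n → ℝ) (g : Fin n → Fin n → Fin n → Fin n → ℝ) : QMat n :=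
  (∑ p : Fin n, ∑ q : Fin n, if q < p then (h p q : ℂ) • singleHerm n p q else 0) +
  ∑ p : Fin n, ∑ q : Fin n, ∑ r : Fin n, ∑ s : Fin n,
    if s < r ∧ r < q ∧ q < p then (g p q r s : ℂ) • doubleHerm n p q r s else 0

/-! ### The enlarged space of `2t` replicas -/

/-- Matrices on the `2t`-fold replicated space `(ℂ^{2^n})^{⊗2t}`. -/
abbrev BigMat (n t : ℕ) := Matrix (Fin (2*t) → Fin n → Fin 2) (Fin (2*t) → Fin n → Fin 2) ℂ

/-- Vectors on the `2t`-fold replicated space. -/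
abbrev BigVec (n t : ℕ) := (Fin (2*t) → Fin n → Fin 2) → ℂ

/-- `A^{⊗t} ⊗ conj(A)^{⊗t}`. -/
def momentKron {n : ℕ} (t : ℕ) (A : QMat n) : BigMat n t :=
  fun x y => ∏ j : Fin (2*t), if (j : ℕ) < t then A (x j) (y j) else star (A (x j) (y j))

/-- The `t`-th moment superoperator `⟨R⟩_t = (1/2π) ∫₀^{2π} R(θ)^{⊗t} ⊗ conj(R(θ))^{⊗t} dθ`. -/
def momentSOp {n : ℕ} (t : ℕ) (R : ℝ → QMat n) : BigMat n t :=
  fun x y => (1 / (2 * Real.pi) : ℂ) *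
    ∫ θ in Set.Ico (0 : ℝ) (2 * Real.pi), momentKron t (R θ) x y

/-- `|ψ₀⟩^{⊗2t}`. -/
def psi0pow (n η t : ℕ) : BigVec n t := fun x => ∏ j : Fin (2*t), psi0 n η (x j)

/-- The `(R⃗,t,k)`-moment vector `|Ψ^R⃗_{t,k}⟩ = (∏_j ⟨R_j⟩_t)^k |ψ₀⟩^{⊗2t}`. -/
def momentVec {n : ℕ} (t m : ℕ) (R : Fin m → ℝ → QMat n) (η k : ℕ) : BigVec n t :=
  ((finProd m fun j => momentSOp t (R j)) ^ k).mulVec (psi0pow n η t)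

/-- A site (all `2t` replicas of qubit `i`) has even Hamming weight everywhere. -/
def evenState {n t : ℕ} (x : Fin (2*t) → Fin n → Fin 2) : Prop :=
  ∀ i : Fin n, Even (Finset.univ.filter fun j : Fin (2*t) => x j i = 1).card

/-- Membership in `H^even_t`: the span of the computational basis states in which
every site has even Hamming weight. -/
def memHeven {n t : ℕ} (v : BigVec n t) : Prop := ∀ x, ¬ evenState x → v x = 0

/-- `Z_p^{⊗2t}`: Pauli-`Z` on qubit `p` in each of the `2t` replicas. -/
def ZpPow {n : ℕ} (t : ℕ) (p : Fin n) : BigMat n t :=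
  Matrix.diagonal fun x => ∏ j : Fin (2*t), (if x j p = 1 then (-1 : ℂ) else 1)

/-- The unitary permuting the `2t` replicas according to `σ`. -/
def replicaPerm {n t : ℕ} (σ : Equiv.Perm (Fin (2*t))) : BigMat n t :=
  fun x y => if ∀ j, x j = y (σ j) then 1 else 0

/-- The unitary permuting the `n` sites according to `π`. -/
def sitePermOp {n t : ℕ} (π : Equiv.Perm (Fin n)) : BigMat n t :=
  fun x y => if ∀ j i, x j (π i) = y j i then 1 else 0

/-- The computational basis vector `|Φ⟩` of the replicated space. -/
def basisVec {n t : ℕ} (x : Fin (2*t) → Fin n → Fin 2) : BigVec n t :=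
  fun y => if y = x then 1 else 0

/-! ### Single and double (qubit) excitation rotations -/

/-- `T = Q_p† Q_q`. -/
def singleT (n : ℕ) (p q : Fin n) : QMat n := embed n Qd p * embed n Qmat q

/-- `T = Q_p† Q_q† Q_r Q_s`. -/
def doubleT (n : ℕ) (p q r s : Fin n) : QMat n :=
  embed n Qd p * embed n Qd q * embed n Qmat r * embed n Qmat s

/-- The open interval `(q, p)` of qubit indices. -/
def Zioo (n : ℕ) (q p : Fin n) : Finset (Fin n) :=
  Finset.univ.filter fun a => q < a ∧ a < p

/-- The qubit single excitation rotation `A^qubit_{pq}(θ)`. -/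
def AqubitRot (n : ℕ) (p q : Fin n) (θ : ℝ) : QMat n :=
  NormedSpace.exp ((θ : ℂ) • (singleT n p q - (singleT n p q)ᴴ))

/-- The single excitation rotation `A_{pq}(θ)`. -/
def ARot (n : ℕ) (p q : Fin n) (θ : ℝ) : QMat n :=
  NormedSpace.exp ((θ : ℂ) • ((singleT n p q - (singleT n p q)ᴴ) * Zstr n (Zioo n q p)))

/-- The qubit double excitation rotation `B^qubit_{pqrs}(θ)`. -/
def BqubitRot (n : ℕ) (p q r s : Fin n) (θ : ℝ) : QMat n :=
  NormedSpace.exp ((θ : ℂ) • (doubleT n p q r s - (doubleT n p q r s)ᴴ))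

/-- The double excitation rotation `B_{pqrs}(θ)`. -/
def BRot (n : ℕ) (p q r s : Fin n) (θ : ℝ) : QMat n :=
  NormedSpace.exp ((θ : ℂ) •
    ((doubleT n p q r s - (doubleT n p q r s)ᴴ) * Zstr n (Zioo n s r ∪ Zioo n q p)))

/-! ### Paired states at `t = 2` -/

/-- Site `i` of `x` is in state `|I_{ab}⟩ = |a,a,b,b⟩`. -/
def siteIsI {n : ℕ} (x : Fin (2*2) → Fin n → Fin 2) (i : Fin n) (a b : Fin 2) : Prop :=
  x ⟨0, by omega⟩ i = a ∧ x ⟨1, by omega⟩ i = a ∧ x ⟨2, by omega⟩ i = b ∧ x ⟨3, by omega⟩ i = b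

/-- Site `i` of `x` is in state `|X_{ab}⟩ = |a,ā,b,b̄⟩`. -/
def siteIsX {n : ℕ} (x : Fin (2*2) → Fin n → Fin 2) (i : Fin n) (a b : Fin 2) : Prop :=
  x ⟨0, by omega⟩ i = a ∧ x ⟨1, by omega⟩ i = a + 1 ∧
  x ⟨2, by omega⟩ i = b ∧ x ⟨3, by omega⟩ i = b + 1

/-- Number of sites of `x` in state `|I_{ab}⟩`. -/
def nI {n : ℕ} (x : Fin (2*2) → Fin n → Fin 2) (a b : Fin 2) : ℕ :=
  (Finset.univ.filter fun i : Fin n => siteIsI x i a b).card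

/-- Number of sites of `x` in state `|X_{ab}⟩`. -/
def nX {n : ℕ} (x : Fin (2*2) → Fin n → Fin 2) (a b : Fin 2) : ℕ :=
  (Finset.univ.filter fun i : Fin n => siteIsX x i a b).card

/-- `x` is a paired state (with `η` electrons). -/
def pairedState {n : ℕ} (η : ℕ) (x : Fin (2*2) → Fin n → Fin 2) : Prop :=
  (∀ i : Fin n, (∃ a b, siteIsI x i a b) ∨ (∃ a b, siteIsX x i a b)) ∧
  nI x 0 1 = nI x 1 0 ∧ nX x 0 0 = nX x 1 1 ∧ nX x 0 1 = nX x 1 0 ∧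
  (nI x 0 0 : ℤ) - (nI x 1 1 : ℤ) = (n : ℤ) - 2 * (η : ℤ)

/-- Membership in `H^paired_2`: the span of all paired states. -/
def memPaired {n : ℕ} (η : ℕ) (v : (Fin (2*2) → Fin n → Fin 2) → ℂ) : Prop :=
  ∀ x, ¬ pairedState η x → v x = 0

/-- The color of site `i`: `some 0` (red) for `I_{01},I_{10}`, `some 1` (green) for
`X_{00},X_{11}`, `some 2` (blue) for `X_{01},X_{10}`, `none` for `I_{00},I_{11}`. -/
def siteColor {n : ℕ} (x : Fin (2*2) → Fin n → Fin 2) (i : Fin n) : Option (Fin 3) :=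
  if siteIsI x i 0 1 ∨ siteIsI x i 1 0 then some 0
  else if siteIsX x i 0 0 ∨ siteIsX x i 1 1 then some 1
  else if siteIsX x i 0 1 ∨ siteIsX x i 1 0 then some 2
  else none

/-- The crossing number of a paired state. -/
def crossNum {n : ℕ} (x : Fin (2*2) → Fin n → Fin 2) : ℕ :=
  (Finset.univ.filter fun q : Fin n × Fin n × Fin n × Fin n =>
    q.1 < q.2.1 ∧ q.2.1 < q.2.2.1 ∧ q.2.2.1 < q.2.2.2 ∧
    siteColor x q.1 ≠ siteColor x q.2.1 ∧
    siteColor x q.1 = siteColor x q.2.2.1 ∧ siteColor x q.1 ≠ none ∧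
    siteColor x q.2.1 = siteColor x q.2.2.2 ∧ siteColor x q.2.1 ≠ none).card

/-- Swap sites `u` and `v`. -/
def swapSites {n t : ℕ} (u v : Fin n) (x : Fin (2*t) → Fin n → Fin 2) :
    Fin (2*t) → Fin n → Fin 2 :=
  fun j i => x j (Equiv.swap u v i)

/-- Flip the bits in positions `W` of sites `u` and `v`. -/
def flipSites {n t : ℕ} (u v : Fin n) (W : Finset (Fin (2*t)))
    (x : Fin (2*t) → Fin n → Fin 2) : Fin (2*t) → Fin n → Fin 2 :=
  fun j i => if (i = u ∨ i = v) ∧ j ∈ W then x j i + 1 else x j i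

/-- `z⃗ = ⊕_{u<a<v} Φ_a`, the XOR of the site strings strictly between `u` and `v`. -/
def zIoo {n t : ℕ} (u v : Fin n) (x : Fin (2*t) → Fin n → Fin 2) : Fin (2*t) → Fin 2 :=
  fun j => ∑ a ∈ Finset.univ.filter (fun a : Fin n => u < a ∧ a < v), x j a

/-- `a ⊙ b = Σ_j a_j b_j` as a natural number. -/
def bitDot {t : ℕ} (a b : Fin (2*t) → Fin 2) : ℕ := ∑ j, ((a j : ℕ) * (b j : ℕ))



/-! ### Auxiliary development for Statement 9 -/

section Aux

variable {n : ℕ}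

/-- Flip the bits in positions `S`. -/
def flipB (S : Finset (Fin n)) (y : Fin n → Fin 2) : Fin n → Fin 2 :=
  fun a => y a + (if a ∈ S then 1 else 0)

lemma fin2_add_one_add_one (b : Fin 2) : b + 1 + 1 = b := by
  fin_cases b <;> rfl

lemma fin2_add_one_ne (b : Fin 2) : b + 1 ≠ b := by
  fin_cases b <;> intro h <;> simpa using congrArg Fin.val h

lemma flipB_flipB (S : Finset (Fin n)) (y : Fin n → Fin 2) : flipB S (flipB S y) = y := by
  funext a
  simp only [flipB]
  split_ifs with h
  · exact fin2_add_one_add_one _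
  · rw [add_zero, add_zero]

lemma flipB_apply_mem {S : Finset (Fin n)} {a : Fin n} (h : a ∈ S) (y : Fin n → Fin 2) :
    flipB S y a = y a + 1 := by simp [flipB, h]

lemma flipB_apply_not_mem {S : Finset (Fin n)} {a : Fin n} (h : a ∉ S) (y : Fin n → Fin 2) :
    flipB S y a = y a := by simp [flipB, h]

/-- `A` is supported on pairs `(flip y, y)`. -/
def FlipM (S : Finset (Fin n)) (A : QMat n) : Prop :=
  ∀ x y, A x y ≠ 0 → x = flipB S y

/-- Nonzero entries of `A` are unimodular. -/
def UnimM (A : QMat n) : Prop := ∀ x y, A x y ≠ 0 → star (A x y) * A x y = 1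

def CoordP (p : Fin n) (A : QMat n) : Prop := ∀ x y, A x y ≠ 0 → x p = y p

def RowOne (p : Fin n) (A : QMat n) : Prop := ∀ x y, A x y ≠ 0 → x p = 1

def ColZero (p : Fin n) (A : QMat n) : Prop := ∀ x y, A x y ≠ 0 → y p = 0

def ColOne (p : Fin n) (A : QMat n) : Prop := ∀ x y, A x y ≠ 0 → y p = 1

def RowZero (p : Fin n) (A : QMat n) : Prop := ∀ x y, A x y ≠ 0 → x p = 0

lemma mul_entry_of_flip {S : Finset (Fin n)} {B : QMat n} (hB : FlipM S B) (A : QMat n)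
    (x y : Fin n → Fin 2) : (A * B) x y = A x (flipB S y) * B (flipB S y) y := by
  rw [Matrix.mul_apply]
  refine Finset.sum_eq_single _ (fun b _ hb => ?_) (fun h => absurd (Finset.mem_univ _) h)
  have : B b y = 0 := by
    by_contra h0
    exact hb (hB b y h0)
  simp [this]

lemma exists_entry_ne_zero {A B : QMat n} {x y : Fin n → Fin 2} (h : (A * B) x y ≠ 0) :
    ∃ z, A x z ≠ 0 ∧ B z y ≠ 0 := by
  rw [Matrix.mul_apply] at h
  by_contra hc
  push_neg at hc
  refine h (Finset.sum_eq_zero fun z _ => ?_)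
  by_cases h0 : A x z = 0
  · simp [h0]
  · simp [hc z h0]

lemma FlipM.mul {S T : Finset (Fin n)} {A B : QMat n} (hA : FlipM S A) (hB : FlipM T B) :
    FlipM (symmDiff S T) (A * B) := by
  intro x y h
  obtain ⟨z, h1, h2⟩ := exists_entry_ne_zero h
  have hz : z = flipB T y := hB _ _ h2
  have hx : x = flipB S z := hA _ _ h1
  subst hz hx
  funext a
  simp only [flipB]
  rw [add_assoc]
  congr 1
  by_cases hS : a ∈ S <;> by_cases hT : a ∈ T <;>
    simp [Finset.mem_symmDiff, hS, hT, fin2_add_one_add_one]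

lemma UnimM.mul {T : Finset (Fin n)} {A B : QMat n} (hA : UnimM A) (hB : UnimM B)
    (hBf : FlipM T B) : UnimM (A * B) := by
  intro x y h
  rw [mul_entry_of_flip hBf] at h ⊢
  have h1 := left_ne_zero_of_mul h
  have h2 := right_ne_zero_of_mul h
  have e1 := hA _ _ h1
  have e2 := hB _ _ h2
  calc star (A x (flipB T y) * B (flipB T y) y) * (A x (flipB T y) * B (flipB T y) y)
      = (star (A x (flipB T y)) * A x (flipB T y)) *
        (star (B (flipB T y) y) * B (flipB T y) y) := by
        rw [StarMul.star_mul]; ring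
    _ = 1 := by rw [e1, e2, one_mul]

/-- Combined structure predicate. -/
def GoodM (A : QMat n) : Prop := (∃ S, FlipM S A) ∧ UnimM A

lemma GoodM.mul {A B : QMat n} (hA : GoodM A) (hB : GoodM B) : GoodM (A * B) := by
  obtain ⟨⟨S, hSA⟩, hUA⟩ := hA
  obtain ⟨⟨T, hTB⟩, hUB⟩ := hB
  exact ⟨⟨symmDiff S T, hSA.mul hTB⟩, hUA.mul hUB hTB⟩

lemma flipB_empty (y : Fin n → Fin 2) : flipB ∅ y = y := by
  funext a; simp [flipB]

lemma GoodM.one : GoodM (1 : QMat n) := by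
  constructor
  · refine ⟨∅, fun x y h => ?_⟩
    rw [flipB_empty]
    by_contra hxy
    exact h (Matrix.one_apply_ne hxy)
  · intro x y h
    by_cases hxy : x = y
    · subst hxy; rw [Matrix.one_apply_eq]; simp
    · exact absurd (Matrix.one_apply_ne hxy) h

lemma GoodM.listProd : ∀ l : List (QMat n), (∀ A ∈ l, GoodM A) → GoodM l.prod := by
  intro l
  induction l with
  | nil => intro _; simpa using GoodM.one
  | cons A l ih =>
      intro h
      rw [List.prod_cons]
      exact (h A (by simp)).mul (ih fun B hB => h B (by simp [hB]))

lemma GoodM.finProd {r : ℕ} (f : Fin r → QMat n) (h : ∀ i, GoodM (f i)) :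
    GoodM (finProd r f) := by
  refine GoodM.listProd _ fun A hA => ?_
  obtain ⟨i, _, rfl⟩ := List.mem_map.mp hA
  exact h i

lemma FlipM.conjT {S : Finset (Fin n)} {A : QMat n} (h : FlipM S A) : FlipM S Aᴴ := by
  intro x y hxy
  rw [Matrix.conjTranspose_apply] at hxy
  have h0 : A y x ≠ 0 := fun h0 => hxy (by simp [h0])
  have := h y x h0
  rw [this, flipB_flipB]

lemma UnimM.conjT {A : QMat n} (h : UnimM A) : UnimM Aᴴ := by
  intro x y hxy
  rw [Matrix.conjTranspose_apply] at hxy ⊢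
  have h0 : A y x ≠ 0 := fun h0 => hxy (by simp [h0])
  have := h y x h0
  rw [star_star]
  rw [mul_comm] at this
  exact this

lemma GoodM.conjT {A : QMat n} (h : GoodM A) : GoodM Aᴴ :=
  ⟨⟨h.1.choose, h.1.choose_spec.conjT⟩, h.2.conjT⟩

lemma CoordP.mul {p : Fin n} {A B : QMat n} (hA : CoordP p A) (hB : CoordP p B) :
    CoordP p (A * B) := by
  intro x y h
  obtain ⟨z, h1, h2⟩ := exists_entry_ne_zero h
  rw [hA _ _ h1, hB _ _ h2]

lemma CoordP.one {p : Fin n} : CoordP p (1 : QMat n) := by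
  intro x y h
  by_cases hxy : x = y
  · rw [hxy]
  · exact absurd (Matrix.one_apply_ne hxy) h

lemma CoordP.listProd {p : Fin n} : ∀ l : List (QMat n), (∀ A ∈ l, CoordP p A) →
    CoordP p l.prod := by
  intro l
  induction l with
  | nil => intro _; simpa using CoordP.one
  | cons A l ih =>
      intro h
      rw [List.prod_cons]
      exact (h A (by simp)).mul (ih fun B hB => h B (by simp [hB]))

lemma CoordP.conjT {p : Fin n} {A : QMat n} (h : CoordP p A) : CoordP p Aᴴ := by
  intro x y hxy
  rw [Matrix.conjTranspose_apply] at hxy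
  have h0 : A y x ≠ 0 := fun h0 => hxy (by simp [h0])
  exact (h y x h0).symm

lemma RowOne.mulRight {p : Fin n} {A B : QMat n} (hA : RowOne p A) : RowOne p (A * B) := by
  intro x y h
  obtain ⟨z, h1, _⟩ := exists_entry_ne_zero h
  exact hA _ _ h1

lemma ColZero.mulCoord {p : Fin n} {A B : QMat n} (hA : ColZero p A) (hB : CoordP p B) :
    ColZero p (A * B) := by
  intro x y h
  obtain ⟨z, h1, h2⟩ := exists_entry_ne_zero h
  rw [← hB _ _ h2]
  exact hA _ _ h1

lemma ColOne.coordMul {p : Fin n} {A B : QMat n} (hA : CoordP p A) (hB : ColOne p B) :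
    ColOne p (A * B) := by
  intro x y h
  obtain ⟨z, _, h2⟩ := exists_entry_ne_zero h
  exact hB _ _ h2

lemma RowZero.coordMul {p : Fin n} {A B : QMat n} (hA : CoordP p A) (hB : RowZero p B) :
    RowZero p (A * B) := by
  intro x y h
  obtain ⟨z, h1, h2⟩ := exists_entry_ne_zero h
  rw [hA _ _ h1]
  exact hB _ _ h2

lemma RowOne.of_colOne {p : Fin n} {A : QMat n} (h : ColOne p A) : RowOne p Aᴴ := by
  intro x y hxy
  rw [Matrix.conjTranspose_apply] at hxy
  have h0 : A y x ≠ 0 := fun h0 => hxy (by simp [h0])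
  exact h y x h0

lemma ColZero.of_rowZero {p : Fin n} {A : QMat n} (h : RowZero p A) : ColZero p Aᴴ := by
  intro x y hxy
  rw [Matrix.conjTranspose_apply] at hxy
  have h0 : A y x ≠ 0 := fun h0 => hxy (by simp [h0])
  exact h y x h0

end Aux
section Base

variable {n : ℕ}

lemma Qmat_ne_zero {a b : Fin 2} (h : Qmat a b ≠ 0) : a = 0 ∧ b = 1 := by
  by_contra hc
  exact h (by simp [Qmat, hc])

lemma Qd_ne_zero {a b : Fin 2} (h : Qd a b ≠ 0) : a = 1 ∧ b = 0 := by
  rw [Qd, Matrix.conjTranspose_apply] at h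
  have h0 : Qmat b a ≠ 0 := fun h0 => h (by simp [h0])
  exact ⟨(Qmat_ne_zero h0).2, (Qmat_ne_zero h0).1⟩

lemma embed_ne_zero {M : Matrix (Fin 2) (Fin 2) ℂ} {p : Fin n} {x y : Fin n → Fin 2}
    (h : embed n M p x y ≠ 0) : (∀ a, a ≠ p → x a = y a) ∧ M (x p) (y p) ≠ 0 := by
  rw [embed] at h
  constructor
  · by_contra hc
    exact h (by rw [if_neg hc, zero_mul])
  · exact right_ne_zero_of_mul h

lemma flipM_embed_Qmat (p : Fin n) : FlipM {p} (embed n Qmat p) := by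
  intro x y h
  obtain ⟨hoff, hM⟩ := embed_ne_zero h
  obtain ⟨h0, h1⟩ := Qmat_ne_zero hM
  funext a
  by_cases ha : a = p
  · subst ha
    rw [flipB_apply_mem (Finset.mem_singleton_self a), h0, h1]
    rfl
  · rw [flipB_apply_not_mem (by simp [ha]), hoff a ha]

lemma flipM_embed_Qd (p : Fin n) : FlipM {p} (embed n Qd p) := by
  intro x y h
  obtain ⟨hoff, hM⟩ := embed_ne_zero h
  obtain ⟨h0, h1⟩ := Qd_ne_zero hM
  funext a
  by_cases ha : a = p
  · subst ha
    rw [flipB_apply_mem (Finset.mem_singleton_self a), h0, h1]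
    rfl
  · rw [flipB_apply_not_mem (by simp [ha]), hoff a ha]

lemma embed_eq_zero_or_one {M : Matrix (Fin 2) (Fin 2) ℂ} (hM : ∀ a b, M a b = 0 ∨ M a b = 1)
    (p : Fin n) (x y : Fin n → Fin 2) : embed n M p x y = 0 ∨ embed n M p x y = 1 := by
  rw [embed]
  rcases hM (x p) (y p) with h | h <;> rw [h] <;> split_ifs <;> simp

lemma Qmat_zero_or_one (a b : Fin 2) : Qmat a b = 0 ∨ Qmat a b = 1 := by
  rw [Qmat]; split_ifs <;> simp

lemma Qd_zero_or_one (a b : Fin 2) : Qd a b = 0 ∨ Qd a b = 1 := by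
  rw [Qd, Matrix.conjTranspose_apply]
  rcases Qmat_zero_or_one b a with h | h <;> rw [h] <;> simp

lemma unimM_of_zero_or_one {A : QMat n} (h : ∀ x y, A x y = 0 ∨ A x y = 1) : UnimM A := by
  intro x y hxy
  rcases h x y with h0 | h1
  · exact absurd h0 hxy
  · rw [h1]; simp

lemma goodM_embed_Qmat (p : Fin n) : GoodM (embed n Qmat p) :=
  ⟨⟨{p}, flipM_embed_Qmat p⟩, unimM_of_zero_or_one (embed_eq_zero_or_one Qmat_zero_or_one p)⟩

lemma goodM_embed_Qd (p : Fin n) : GoodM (embed n Qd p) :=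
  ⟨⟨{p}, flipM_embed_Qd p⟩, unimM_of_zero_or_one (embed_eq_zero_or_one Qd_zero_or_one p)⟩

lemma Zstr_ne_zero {S : Finset (Fin n)} {x y : Fin n → Fin 2} (h : Zstr n S x y ≠ 0) :
    x = y := by
  by_contra hc
  exact h (Matrix.diagonal_apply_ne _ hc)

lemma flipM_Zstr (S : Finset (Fin n)) : FlipM ∅ (Zstr n S) := by
  intro x y h
  rw [flipB_empty]
  exact Zstr_ne_zero h

lemma unimM_Zstr (S : Finset (Fin n)) : UnimM (Zstr n S) := by
  intro x y h
  have hxy := Zstr_ne_zero h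
  subst hxy
  rw [Zstr, Matrix.diagonal_apply_eq]
  have hs : star (∏ a ∈ S, if x a = 1 then (-1 : ℂ) else 1)
      = ∏ a ∈ S, if x a = 1 then (-1 : ℂ) else 1 := by
    rw [show (star : ℂ → ℂ) = (starRingEnd ℂ) from rfl, map_prod]
    refine Finset.prod_congr rfl fun a _ => ?_
    split_ifs <;> simp
  rw [hs, ← Finset.prod_mul_distrib]
  refine Finset.prod_eq_one fun a _ => ?_
  split_ifs <;> norm_num

lemma goodM_Zstr (S : Finset (Fin n)) : GoodM (Zstr n S) :=
  ⟨⟨∅, flipM_Zstr S⟩, unimM_Zstr S⟩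

lemma coordP_embed {M : Matrix (Fin 2) (Fin 2) ℂ} {p q : Fin n} (hpq : q ≠ p) :
    CoordP p (embed n M q) := by
  intro x y h
  exact (embed_ne_zero h).1 p (fun hc => hpq hc.symm)

lemma coordP_Zstr {p : Fin n} (S : Finset (Fin n)) : CoordP p (Zstr n S) := by
  intro x y h
  rw [Zstr_ne_zero h]

end Base
section ExcProps

variable {n : ℕ}

lemma finProd_succ {α : Type*} [Monoid α] (r : ℕ) (f : Fin (r + 1) → α) :
    finProd (r + 1) f = f 0 * finProd r (f ∘ Fin.succ) := by
  rw [finProd, finProd, List.finRange_succ, List.map_cons, List.prod_cons, List.map_map]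

/-- The key structural properties of an excitation operator. -/
lemma exc_props {τ : QMat n} (h : IsExcitationOp τ) :
    ∃ (S : Finset (Fin n)) (p₀ : Fin n),
      FlipM S τ ∧ UnimM τ ∧ RowOne p₀ τ ∧ ColZero p₀ τ := by
  obtain ⟨r, c, d, hr, hinj, hcase⟩ := h
  obtain ⟨r', rfl⟩ : ∃ r', r = r' + 1 := ⟨r - 1, (Nat.succ_pred_eq_of_pos hr).symm⟩
  have hc_succ : ∀ i : Fin r', c (Fin.succ i) ≠ c 0 := by
    intro i hc
    have := hinj (a₁ := Sum.inl (Fin.succ i)) (a₂ := Sum.inl 0) (by simpa using hc)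
    simp at this
  have hd_ne : ∀ i : Fin (r' + 1), d i ≠ c 0 := by
    intro i hc
    have := hinj (a₁ := Sum.inr i) (a₂ := Sum.inl 0) (by simpa using hc)
    simp at this
  rcases hcase with hq | hf
  · -- qubit excitation
    subst hq
    have g : GoodM (qubitExc n (r' + 1) c d) := by
      rw [qubitExc]
      exact (GoodM.finProd _ fun i => goodM_embed_Qd (c i)).mul
        (GoodM.finProd _ fun i => goodM_embed_Qmat (d i))
    refine ⟨g.1.choose, c 0, g.1.choose_spec, g.2, ?_, ?_⟩
    · -- RowOne
      rw [qubitExc, finProd_succ, mul_assoc]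
      apply RowOne.mulRight
      intro x y hxy
      exact ((Qd_ne_zero (embed_ne_zero hxy).2).1 : x (c 0) = 1)
    · -- ColZero
      rw [qubitExc, finProd_succ, mul_assoc]
      apply ColZero.mulCoord
      · intro x y hxy
        exact (Qd_ne_zero (embed_ne_zero hxy).2).2
      · apply CoordP.mul
        · refine CoordP.listProd _ fun A hA => ?_
          obtain ⟨i, _, rfl⟩ := List.mem_map.mp hA
          exact coordP_embed (hc_succ i)
        · refine CoordP.listProd _ fun A hA => ?_
          obtain ⟨i, _, rfl⟩ := List.mem_map.mp hA
          exact coordP_embed (hd_ne i)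
  · -- fermionic excitation
    subst hf
    have gaop : ∀ p, GoodM (aop n p) := fun p =>
      (goodM_Zstr _).mul (goodM_embed_Qmat p)
    have coord_aop : ∀ {p q : Fin n}, q ≠ p → CoordP p (aop n q) := by
      intro p q hq
      exact (coordP_Zstr _).mul (coordP_embed hq)
    have g : GoodM (fermExc n (r' + 1) c d) := by
      rw [fermExc]
      exact (GoodM.finProd _ fun i => (gaop (c i)).conjT).mul
        (GoodM.finProd _ fun i => gaop (d i))
    refine ⟨g.1.choose, c 0, g.1.choose_spec, g.2, ?_, ?_⟩
    · -- RowOne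
      rw [fermExc, finProd_succ, mul_assoc]
      apply RowOne.mulRight
      refine RowOne.of_colOne ?_
      refine ColOne.coordMul (coordP_Zstr _) ?_
      intro x y hxy
      exact (Qmat_ne_zero (embed_ne_zero hxy).2).2
    · -- ColZero
      rw [fermExc, finProd_succ, mul_assoc]
      apply ColZero.mulCoord
      · refine ColZero.of_rowZero ?_
        refine RowZero.coordMul (coordP_Zstr _) ?_
        intro x y hxy
        exact (Qmat_ne_zero (embed_ne_zero hxy).2).1
      · apply CoordP.mul
        · refine CoordP.listProd _ fun A hA => ?_
          obtain ⟨i, _, rfl⟩ := List.mem_map.mp hA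
          exact ((coord_aop (hc_succ i))).conjT
        · refine CoordP.listProd _ fun A hA => ?_
          obtain ⟨i, _, rfl⟩ := List.mem_map.mp hA
          exact coord_aop (hd_ne i)

end ExcProps
section GAlgebra

variable {n : ℕ} {τ : QMat n} {S : Finset (Fin n)} {p₀ : Fin n}

lemma tau_sq_zero (hR : RowOne p₀ τ) (hC : ColZero p₀ τ) : τ * τ = 0 := by
  ext x y
  rw [Matrix.mul_apply, Matrix.zero_apply]
  refine Finset.sum_eq_zero fun z _ => ?_
  by_cases h1 : τ x z = 0
  · rw [h1, zero_mul]
  by_cases h2 : τ z y = 0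
  · rw [h2, mul_zero]
  exact absurd (hR z y h2) (by rw [hC x z h1]; exact zero_ne_one)

lemma tau_partial_isometry (hF : FlipM S τ) (hU : UnimM τ) : τ * τᴴ * τ = τ := by
  have hFH : FlipM S τᴴ := hF.conjT
  ext x y
  rw [mul_entry_of_flip hF, mul_entry_of_flip hFH, flipB_flipB]
  by_cases h0 : τ x y = 0
  · rw [h0, zero_mul, zero_mul]
  · have hx := hF x y h0
    rw [Matrix.conjTranspose_apply, ← hx]
    calc τ x y * star (τ x y) * τ x y = star (τ x y) * τ x y * τ x y := by ring
      _ = τ x y := by rw [hU x y h0, one_mul]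

lemma G_cube (hF : FlipM S τ) (hU : UnimM τ) (hR : RowOne p₀ τ) (hC : ColZero p₀ τ) :
    (τ - τᴴ) ^ 3 = -(τ - τᴴ) := by
  have h1 : τ * τ = 0 := tau_sq_zero hR hC
  have h2 : τᴴ * τᴴ = 0 := by
    rw [← Matrix.conjTranspose_mul, h1, Matrix.conjTranspose_zero]
  have h3 : τ * τᴴ * τ = τ := tau_partial_isometry hF hU
  have h4 : τᴴ * τ * τᴴ = τᴴ := by
    have := congrArg Matrix.conjTranspose h3
    rwa [Matrix.conjTranspose_mul, Matrix.conjTranspose_mul,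
      Matrix.conjTranspose_conjTranspose, ← mul_assoc] at this
  have e : (τ - τᴴ) ^ 3 =
      τ * τ * τ - τ * τ * τᴴ - (τ * τᴴ) * τ + (τ * (τᴴ * τᴴ))
      - τᴴ * (τ * τ) + (τᴴ * τ) * τᴴ + (τᴴ * (τᴴ * τ)) - τᴴ * (τᴴ * τᴴ) := by
    noncomm_ring
  rw [e, h1, h2, h3]
  rw [show τᴴ * (τᴴ * τ) = (τᴴ * τᴴ) * τ from by noncomm_ring, h2]
  rw [show (τᴴ * τ) * τᴴ = τᴴ * (τ * τᴴ) from by noncomm_ring]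
  rw [show τᴴ * (τ * τᴴ) = (τᴴ * τ) * τᴴ from by noncomm_ring, h4]
  simp only [zero_mul, mul_zero, sub_zero, zero_sub, add_zero]
  noncomm_ring

lemma G_pow_odd (hG : (τ - τᴴ) ^ 3 = -(τ - τᴴ)) (m : ℕ) :
    (τ - τᴴ) ^ (2 * m + 1) = ((-1 : ℂ) ^ m) • (τ - τᴴ) := by
  induction m with
  | zero => simp
  | succ m ih =>
      have : 2 * (m + 1) + 1 = (2 * m + 1) + 2 := by ring
      rw [this, pow_add, ih, Matrix.smul_mul]
      rw [show (τ - τᴴ) * (τ - τᴴ) ^ 2 = (τ - τᴴ) ^ 3 from (pow_succ' _ 2).symm, hG,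
        show ((-1 : ℂ)) ^ (m + 1) = ((-1 : ℂ)) ^ m * -1 from pow_succ _ m,
        mul_neg_one, neg_smul, smul_neg]

lemma G_pow_even (hG : (τ - τᴴ) ^ 3 = -(τ - τᴴ)) (m : ℕ) :
    (τ - τᴴ) ^ (2 * m + 2) = ((-1 : ℂ) ^ m) • (τ - τᴴ) ^ 2 := by
  induction m with
  | zero => simp
  | succ m ih =>
      have : 2 * (m + 1) + 2 = (2 * m + 2) + 2 := by ring
      rw [this, pow_add, ih, Matrix.smul_mul, ← pow_add]
      have h4 : (τ - τᴴ) ^ (2 + 2) = -((τ - τᴴ) ^ 2) := by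
        rw [show (2 + 2 : ℕ) = 3 + 1 from rfl, pow_succ, hG, neg_mul, ← pow_two]
      rw [h4, show ((-1 : ℂ)) ^ (m + 1) = ((-1 : ℂ)) ^ m * -1 from pow_succ _ m,
        mul_neg_one, neg_smul, smul_neg]

lemma excRot_closed (hG : (τ - τᴴ) ^ 3 = -(τ - τᴴ)) (θ : ℝ) :
    excRot τ θ = (1 + ((1 : ℂ) - (Real.cos θ : ℂ)) • (τ - τᴴ) ^ 2)
      + (Real.sin θ : ℂ) • (τ - τᴴ) := by
  simp only [excRot, NormedSpace.exp_eq_tsum (𝕂 := ℂ)]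
  have hterm : ∀ k : ℕ, ((k.factorial : ℂ))⁻¹ • (((θ : ℂ)) • (τ - τᴴ)) ^ k
      = ((θ : ℂ) ^ k / (k.factorial : ℂ)) • (τ - τᴴ) ^ k := by
    intro k
    rw [smul_pow, smul_smul, div_eq_mul_inv, mul_comm]
  rw [tsum_congr hterm]
  refine HasSum.tsum_eq ?_
  refine HasSum.even_add_odd ?_ ?_
  · -- even part
    have hcos := Complex.hasSum_cos (θ : ℂ)
    have h1 := (hasSum_nat_add_iff' (f := fun m : ℕ =>
      (-1 : ℂ) ^ m * (θ : ℂ) ^ (2 * m) / (((2 * m).factorial : ℂ))) 1).mpr hcos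
    simp only [Finset.range_one, Finset.sum_singleton, Nat.mul_zero, pow_zero,
      Nat.factorial_zero, Nat.cast_one, div_one, one_mul] at h1
    have h2 := (h1.neg).smul_const ((τ - τᴴ) ^ 2)
    rw [neg_sub] at h2
    have heq : ∀ m : ℕ, ((θ : ℂ) ^ (2 * (m + 1)) / (((2 * (m + 1)).factorial : ℂ)))
          • (τ - τᴴ) ^ (2 * (m + 1))
        = (-((-1 : ℂ) ^ (m + 1) * (θ : ℂ) ^ (2 * (m + 1)) / (((2 * (m + 1)).factorial : ℂ))))
          • (τ - τᴴ) ^ 2 := by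
      intro m
      have e2 : 2 * (m + 1) = 2 * m + 2 := by ring
      rw [e2, G_pow_even hG, smul_smul]
      congr 1
      rw [pow_succ]
      ring
    have h3 := (hasSum_nat_add_iff (f := fun m : ℕ =>
        ((θ : ℂ) ^ (2 * m) / (((2 * m).factorial : ℂ))) • (τ - τᴴ) ^ (2 * m)) 1).mp
      (by simp only [heq]; exact h2)
    simp only [Finset.range_one, Finset.sum_singleton, Nat.mul_zero, pow_zero,
      Nat.factorial_zero, Nat.cast_one, div_one, one_smul] at h3
    rw [add_comm, ← Complex.ofReal_cos] at h3
    exact h3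
  · -- odd part
    have hsin := Complex.hasSum_sin (θ : ℂ)
    have h4 := hsin.smul_const (τ - τᴴ)
    have heq : ∀ m : ℕ, ((θ : ℂ) ^ (2 * m + 1) / (((2 * m + 1).factorial : ℂ))) • (τ - τᴴ) ^ (2 * m + 1)
        = ((-1 : ℂ) ^ m * (θ : ℂ) ^ (2 * m + 1) / (((2 * m + 1).factorial : ℂ))) • (τ - τᴴ) := by
      intro m
      rw [G_pow_odd hG, smul_smul]
      congr 1
      ring
    rw [show Complex.sin (θ : ℂ) = ((Real.sin θ : ℝ) : ℂ) from (Complex.ofReal_sin θ).symm] at h4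
    simp only [heq]
    exact h4

end GAlgebra
section Entries

variable {n : ℕ} {τ : QMat n} {S : Finset (Fin n)} {p₀ : Fin n}

lemma G_flip (hF : FlipM S τ) : FlipM S (τ - τᴴ) := by
  intro x y h
  rw [Matrix.sub_apply] at h
  by_cases h1 : τ x y = 0
  · have h2 : τᴴ x y ≠ 0 := fun h2 => h (by rw [h1, h2, sub_zero])
    exact hF.conjT x y h2
  · exact hF x y h1

lemma G_diag (hR : RowOne p₀ τ) (hC : ColZero p₀ τ) (x : Fin n → Fin 2) :
    (τ - τᴴ) x x = 0 := by
  have h1 : τ x x = 0 := by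
    by_contra h
    exact absurd (hR x x h) (by rw [hC x x h]; exact zero_ne_one)
  rw [Matrix.sub_apply, Matrix.conjTranspose_apply, h1]
  simp

lemma G_sq_offdiag (hF : FlipM S τ) {x y : Fin n → Fin 2} (hxy : x ≠ y) :
    ((τ - τᴴ) ^ 2) x y = 0 := by
  by_contra h
  rw [pow_two] at h
  obtain ⟨z, h1, h2⟩ := exists_entry_ne_zero h
  have e1 := G_flip hF _ _ h1
  have e2 := G_flip hF _ _ h2
  rw [e2, flipB_flipB] at e1
  exact hxy e1

variable (hF : FlipM S τ) (hU : UnimM τ) (hR : RowOne p₀ τ) (hC : ColZero p₀ τ)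
include hF hU hR hC

lemma excRot_offdiag (θ : ℝ) {x y : Fin n → Fin 2} (hxy : x ≠ y) :
    excRot τ θ x y = (Real.sin θ : ℂ) * (τ - τᴴ) x y := by
  rw [excRot_closed (G_cube hF hU hR hC) θ]
  rw [Matrix.add_apply, Matrix.add_apply, Matrix.smul_apply, Matrix.smul_apply,
    Matrix.one_apply_ne hxy, G_sq_offdiag hF hxy]
  simp [smul_eq_mul]

lemma excRot_zero_entry (θ : ℝ) {x y : Fin n → Fin 2} (hxy : x ≠ y)
    (hfl : x ≠ flipB S y) : excRot τ θ x y = 0 := by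
  rw [excRot_offdiag hF hU hR hC θ hxy]
  have : (τ - τᴴ) x y = 0 := by
    by_contra h
    exact hfl (G_flip hF _ _ h)
  rw [this, mul_zero]

lemma excRot_diag_reflect (θ : ℝ) (x : Fin n → Fin 2) :
    excRot τ (2 * Real.pi - θ) x x = excRot τ θ x x := by
  rw [excRot_closed (G_cube hF hU hR hC), excRot_closed (G_cube hF hU hR hC)]
  rw [Matrix.add_apply, Matrix.add_apply, Matrix.add_apply, Matrix.add_apply,
    Matrix.smul_apply, Matrix.smul_apply, Matrix.smul_apply, Matrix.smul_apply,
    G_diag hR hC, Real.cos_two_pi_sub]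
  simp

lemma excRot_offdiag_reflect (θ : ℝ) {x y : Fin n → Fin 2} (hxy : x ≠ y) :
    excRot τ (2 * Real.pi - θ) x y = -(excRot τ θ x y) := by
  rw [excRot_offdiag hF hU hR hC _ hxy, excRot_offdiag hF hU hR hC _ hxy,
    Real.sin_two_pi_sub]
  push_cast
  ring

end Entries
section MainEntry

variable {n : ℕ}

lemma fin2_eq_zero_or_one (b : Fin 2) : b = 0 ∨ b = 1 := by
  fin_cases b
  · exact Or.inl rfl
  · exact Or.inr rfl

lemma odd_card_diff {t : ℕ} {x y : Fin (2 * t) → Fin n → Fin 2} (i : Fin n)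
    (hyi : Even (Finset.univ.filter fun j => y j i = 1).card)
    (hxi : ¬ Even (Finset.univ.filter fun j => x j i = 1).card) :
    Odd (Finset.univ.filter fun j : Fin (2 * t) => x j i ≠ y j i).card := by
  have key : ((Finset.univ.filter fun j : Fin (2 * t) => x j i = 1).card
      + (Finset.univ.filter fun j : Fin (2 * t) => y j i = 1).card) % 2
      = (Finset.univ.filter fun j : Fin (2 * t) => x j i ≠ y j i).card % 2 := by
    rw [Finset.card_filter, Finset.card_filter, Finset.card_filter, ← Finset.sum_add_distrib,
      Finset.sum_nat_mod (f := fun j => (if x j i = 1 then 1 else 0) + if y j i = 1 then 1 else 0),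
      Finset.sum_nat_mod (f := fun j => if x j i ≠ y j i then 1 else 0)]
    congr 1
    refine Finset.sum_congr rfl fun j _ => ?_
    rcases fin2_eq_zero_or_one (x j i) with h1 | h1 <;>
      rcases fin2_eq_zero_or_one (y j i) with h2 | h2 <;>
      rw [h1, h2] <;>
      simp [zero_ne_one, one_ne_zero]
  rw [Nat.even_iff] at hyi
  rw [Nat.not_even_iff] at hxi
  rw [Nat.odd_iff]
  omega

variable {τ : QMat n} {S : Finset (Fin n)} {p₀ : Fin n}

lemma momentSOp_entry_zero {t : ℕ} {R : ℝ → QMat n} {τ : QMat n}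
    (hEx : IsExcitationOp τ) (hRe : ∀ θ, R θ = excRot τ θ)
    {x y : Fin (2 * t) → Fin n → Fin 2} (hy : evenState y) (hx : ¬ evenState x) :
    momentSOp t R x y = 0 := by
  obtain ⟨S, p₀, hF, hU, hRo, hC⟩ := exc_props hEx
  simp only [momentSOp]
  suffices h : (∫ θ in Set.Ico (0 : ℝ) (2 * Real.pi), momentKron t (R θ) x y) = 0 by
    rw [h, mul_zero]
  by_cases hcase : ∀ j, x j = y j ∨ x j = flipB S (y j)
  · -- parity argument
    obtain ⟨i, hi⟩ := not_forall.mp hx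
    have hyi := hy i
    have hodd := odd_card_diff i hyi hi
    have hne : (Finset.univ.filter fun j : Fin (2 * t) => x j i ≠ y j i).Nonempty := by
      rw [← Finset.card_pos]
      rcases hodd with ⟨k, hk⟩
      omega
    obtain ⟨j₀, hj₀⟩ := hne
    rw [Finset.mem_filter] at hj₀
    have hj₀ne : x j₀ ≠ y j₀ := fun h => hj₀.2 (by rw [h])
    have hiS : i ∈ S := by
      rcases hcase j₀ with h | h
      · exact absurd h hj₀ne
      · by_contra hiS
        exact hj₀.2 (by rw [h, flipB_apply_not_mem hiS])
    have hsets : (Finset.univ.filter fun j : Fin (2 * t) => x j ≠ y j)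
        = Finset.univ.filter fun j : Fin (2 * t) => x j i ≠ y j i := by
      ext j
      simp only [Finset.mem_filter, Finset.mem_univ, true_and]
      constructor
      · intro hj
        rcases hcase j with h | h
        · exact absurd h hj
        · rw [h, flipB_apply_mem hiS]
          exact fun hc => fin2_add_one_ne _ hc
      · intro hj h
        exact hj (by rw [h])
    have hoddF : Odd (Finset.univ.filter fun j : Fin (2 * t) => x j ≠ y j).card := by
      rw [hsets]; exact hodd
    have hsign : (∏ j : Fin (2 * t), if x j = y j then (1 : ℂ) else -1) = -1 := by
      rw [Finset.prod_ite, Finset.prod_const_one, one_mul, Finset.prod_const]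
      have : (Finset.univ.filter fun j : Fin (2 * t) => ¬ x j = y j)
          = Finset.univ.filter fun j : Fin (2 * t) => x j ≠ y j := rfl
      rw [this]
      exact hoddF.neg_one_pow
    have hrefl : ∀ θ : ℝ, momentKron t (R (2 * Real.pi - θ)) x y
        = - momentKron t (R θ) x y := by
      intro θ
      have hfac : ∀ j : Fin (2 * t),
          (if (j : ℕ) < t then R (2 * Real.pi - θ) (x j) (y j)
            else star (R (2 * Real.pi - θ) (x j) (y j)))
          = (if x j = y j then (1 : ℂ) else -1) *
            (if (j : ℕ) < t then R θ (x j) (y j) else star (R θ (x j) (y j))) := by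
        intro j
        rw [hRe, hRe]
        by_cases hxy : x j = y j
        · rw [if_pos hxy, one_mul, hxy]
          by_cases hjt : (j : ℕ) < t
          · rw [if_pos hjt, if_pos hjt, excRot_diag_reflect hF hU hRo hC]
          · rw [if_neg hjt, if_neg hjt, excRot_diag_reflect hF hU hRo hC]
        · rw [if_neg hxy]
          by_cases hjt : (j : ℕ) < t
          · rw [if_pos hjt, if_pos hjt, excRot_offdiag_reflect hF hU hRo hC θ hxy,
              neg_one_mul]
          · rw [if_neg hjt, if_neg hjt, excRot_offdiag_reflect hF hU hRo hC θ hxy,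
              star_neg, neg_one_mul]
      simp only [momentKron]
      calc (∏ j : Fin (2 * t), if (j : ℕ) < t then R (2 * Real.pi - θ) (x j) (y j)
              else star (R (2 * Real.pi - θ) (x j) (y j)))
          = ∏ j : Fin (2 * t), ((if x j = y j then (1 : ℂ) else -1) *
              (if (j : ℕ) < t then R θ (x j) (y j) else star (R θ (x j) (y j)))) :=
            Finset.prod_congr rfl fun j _ => hfac j
        _ = (∏ j : Fin (2 * t), if x j = y j then (1 : ℂ) else -1) *
              ∏ j : Fin (2 * t), (if (j : ℕ) < t then R θ (x j) (y j)
                else star (R θ (x j) (y j))) := Finset.prod_mul_distrib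
        _ = _ := by rw [hsign, neg_one_mul]
    have h1 : (∫ θ in Set.Ico (0 : ℝ) (2 * Real.pi), momentKron t (R θ) x y)
        = ∫ θ in (0 : ℝ)..(2 * Real.pi), momentKron t (R θ) x y := by
      rw [intervalIntegral.integral_of_le Real.two_pi_pos.le,
        MeasureTheory.setIntegral_congr_set MeasureTheory.Ico_ae_eq_Ioc]
    have h2 : (∫ θ in (0 : ℝ)..(2 * Real.pi), momentKron t (R (2 * Real.pi - θ)) x y)
        = ∫ θ in (0 : ℝ)..(2 * Real.pi), momentKron t (R θ) x y := by
      have := intervalIntegral.integral_comp_sub_left (a := 0) (b := 2 * Real.pi)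
        (fun θ => momentKron t (R θ) x y) (2 * Real.pi)
      simpa using this
    have h3 : (∫ θ in (0 : ℝ)..(2 * Real.pi), momentKron t (R (2 * Real.pi - θ)) x y)
        = - ∫ θ in (0 : ℝ)..(2 * Real.pi), momentKron t (R θ) x y := by
      simp_rw [hrefl]
      exact intervalIntegral.integral_neg
    rw [h1]
    exact add_self_eq_zero.mp (eq_neg_iff_add_eq_zero.mp (h2.symm.trans h3))
  · -- a factor is identically zero
    push_neg at hcase
    obtain ⟨j, hj1, hj2⟩ := hcase
    have hj1' : x j ≠ y j := hj1
    have hzero : ∀ θ : ℝ, momentKron t (R θ) x y = 0 := by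
      intro θ
      simp only [momentKron]
      refine Finset.prod_eq_zero (Finset.mem_univ j) ?_
      rw [hRe]
      by_cases hjt : (j : ℕ) < t
      · rw [if_pos hjt]
        exact excRot_zero_entry hF hU hRo hC θ hj1' hj2
      · rw [if_neg hjt, excRot_zero_entry hF hU hRo hC θ hj1' hj2, star_zero]
    simp only [hzero]
    exact MeasureTheory.integral_zero _ _

end MainEntry
section Assemble

variable {n : ℕ}

lemma memHeven_mulVec {t : ℕ} {R : ℝ → QMat n} (hR : IsExcRotation R)
    (v : BigVec n t) (hv : memHeven v) : memHeven ((momentSOp t R).mulVec v) := by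
  intro x hx
  simp only [Matrix.mulVec, dotProduct]
  refine Finset.sum_eq_zero fun y _ => ?_
  by_cases hvy : v y = 0
  · rw [hvy, mul_zero]
  · have hy : evenState y := by
      by_contra h
      exact hvy (hv y h)
    obtain ⟨τ, hEx, hRe⟩ := hR
    rw [momentSOp_entry_zero hEx hRe hy hx, zero_mul]

/-- `A` preserves `H^even`. -/
def PresHeven {t : ℕ} (A : BigMat n t) : Prop :=
  ∀ v, memHeven v → memHeven (A.mulVec v)

lemma PresHeven.mul {t : ℕ} {A B : BigMat n t} (hA : PresHeven A) (hB : PresHeven B) :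
    PresHeven (A * B) := by
  intro v hv
  rw [← Matrix.mulVec_mulVec]
  exact hA _ (hB _ hv)

lemma PresHeven.one {t : ℕ} : PresHeven (1 : BigMat n t) := fun v hv => by
  rwa [Matrix.one_mulVec]

lemma PresHeven.listProd {t : ℕ} : ∀ l : List (BigMat n t), (∀ A ∈ l, PresHeven A) →
    PresHeven l.prod := by
  intro l
  induction l with
  | nil => intro _; simpa using PresHeven.one
  | cons A l ih =>
      intro h
      rw [List.prod_cons]
      exact (h A (by simp)).mul (ih fun B hB => h B (by simp [hB]))

lemma PresHeven.pow {t : ℕ} {A : BigMat n t} (hA : PresHeven A) (k : ℕ) :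
    PresHeven (A ^ k) := by
  induction k with
  | zero => simpa using PresHeven.one
  | succ k ih => rw [pow_succ]; exact ih.mul hA

lemma memHeven_psi0pow (η t : ℕ) : memHeven (psi0pow n η t) := by
  intro x hx
  by_contra h0
  apply hx
  intro i
  have hj : ∀ j, psi0 n η (x j) ≠ 0 := by
    intro j hj
    exact h0 (by simp only [psi0pow]; exact Finset.prod_eq_zero (Finset.mem_univ j) hj)
  have hcond : ∀ j, ∀ i : Fin n, x j i = 1 ↔ (i : ℕ) < η := by
    intro j
    by_contra hc
    exact hj j (by simp only [psi0]; rw [if_neg hc])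
  by_cases hi : (i : ℕ) < η
  · have he : (Finset.univ.filter fun j : Fin (2 * t) => x j i = 1) = Finset.univ :=
      Finset.filter_true_of_mem fun j _ => (hcond j i).mpr hi
    rw [he, Finset.card_univ, Fintype.card_fin]
    exact even_two_mul t
  · have he : (Finset.univ.filter fun j : Fin (2 * t) => x j i = 1) = ∅ :=
      Finset.filter_false_of_mem fun j _ h => hi ((hcond j i).mp h)
    rw [he, Finset.card_empty]
    exact Even.zero

end Assemble
/-- `H^even_t` is invariant under the moment superoperators, and all
moment vectors (and their limits) lie in it. -/
theorem Heven_invariant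
    (n t : ℕ) (ht : 0 < t) :
    (∀ R : ℝ → QMat n, IsExcRotation R →
      ∀ v : BigVec n t, memHeven v → memHeven ((momentSOp t R).mulVec v)) ∧
    (∀ (η m : ℕ), η ≤ n → ∀ R : Fin m → ℝ → QMat n, (∀ j, IsExcRotation (R j)) →
      (∀ k : ℕ, 0 < k → memHeven (momentVec t m R η k)) ∧
      ∀ Ψ : BigVec n t,
        Tendsto (fun k => momentVec t m R η k) atTop (nhds Ψ) → memHeven Ψ) := by
  have part1 : ∀ R : ℝ → QMat n, IsExcRotation R →
      ∀ v : BigVec n t, memHeven v → memHeven ((momentSOp t R).mulVec v) :=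
    fun R hR v hv => memHeven_mulVec hR v hv
  refine ⟨part1, fun η m _ R hR => ?_⟩
  have hP : PresHeven (finProd m fun j => momentSOp t (R j)) := by
    refine PresHeven.listProd _ fun A hA => ?_
    obtain ⟨j, _, rfl⟩ := List.mem_map.mp hA
    exact fun v hv => part1 _ (hR j) v hv
  have hk : ∀ k : ℕ, memHeven (momentVec t m R η k) := by
    intro k
    simp only [momentVec]
    exact (hP.pow k) _ (memHeven_psi0pow η t)
  refine ⟨fun k _ => hk k, fun Ψ hT => ?_⟩
  intro x hx
  have h1 : Tendsto (fun k => momentVec t m R η k x) atTop (nhds (Ψ x)) :=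
    tendsto_pi_nhds.mp hT x
  have h2 : (fun k => momentVec t m R η k x) = fun _ => (0 : ℂ) :=
    funext fun k => hk k x hx
  rw [h2] at h1
  exact tendsto_nhds_unique h1 tendsto_const_nhds

end DUCC
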